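/- For every ε ∈ (0,1/32), every process on I_ε with Σ_{i ∈ I_ε} p_i^1 = 1, and every step t, one has W_{t+B_ε} ≤ max( e^{−1/(81·B_ε)} · W_t , 64 · ε · B_ε³ ). -/

import Mathlib

/-- `B_ε := 2⌈log₂(1/ε)⌉ + 1`. -/
noncomputable def Bval (ε : ℝ) : ℤ := 2 * ⌈Real.logb 2 (1 / ε)⌉ + 1

/-- `I_ε`: the odd integers `i` with `-B_ε ≤ i ≤ B_ε`. -/
noncomputable def Iset (ε : ℝ) : Finset ℤ :=
  (Finset.Icc (-(Bval ε)) (Bval ε)).filter (fun i => Odd i)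

/-- `I_ε⁺ := I_ε ∩ {i > 0}`. -/
noncomputable def Ipos (ε : ℝ) : Finset ℤ := (Iset ε).filter (fun i => 0 < i)

/-- `I_ε⁻ := I_ε ∩ {i < 0}`. -/
noncomputable def Ineg (ε : ℝ) : Finset ℤ := (Iset ε).filter (fun i => i < 0)

/-- A process on `I_ε` (Definition 4 of the paper): at each step `t ≥ 1` and each `i ∈ I_ε`,
an amount `q t i` with `0 ≤ q t i ≤ p t i` of the weight `p t i` moves to position `i - 2`
and the remaining `p t i - q t i` moves to position `i + 2`, clamped to stay in `[-B_ε, B_ε]`;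
`p (t+1) i` is the total weight arriving at `i`.  Moreover:
(i) at every step at least `15/16` of the mass on `I_ε⁺` moves down, and
(ii) for every `i ∈ I_ε⁻` whose mass is at least `(1/B_ε⁴) Σ_{j ∈ I_ε⁺} p t j`,
at most `1/16` of the weight at `i` moves up. -/
structure MProcess (ε : ℝ) where
  p : ℕ → ℤ → ℝ
  q : ℕ → ℤ → ℝ
  q_nonneg : ∀ t i, 0 ≤ q t i
  q_le_p : ∀ t i, q t i ≤ p t i
  update : ∀ t, 1 ≤ t → ∀ i ∈ Iset ε,
    p (t + 1) i =
      (∑ j ∈ (Iset ε).filter (fun j => max (j - 2) (-(Bval ε)) = i), q t j) +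
      (∑ j ∈ (Iset ε).filter (fun j => min (j + 2) (Bval ε) = i), (p t j - q t j))
  mass_down : ∀ t, 1 ≤ t →
    (15 / 16 : ℝ) * ∑ i ∈ Ipos ε, p t i ≤ ∑ i ∈ Ipos ε, q t i
  up_small : ∀ t, 1 ≤ t → ∀ i ∈ Ineg ε,
    (1 / (Bval ε : ℝ) ^ 4) * (∑ j ∈ Ipos ε, p t j) ≤ p t i →
    p t i - q t i ≤ (1 / 16 : ℝ) * p t i

/-- `W_t := Σ_{i ∈ I_ε⁻} 2^i p_i^t + Σ_{i ∈ I_ε⁺} p_i^t`. -/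
noncomputable def Wfun (ε : ℝ) (P : MProcess ε) (t : ℕ) : ℝ :=
  (∑ i ∈ Ineg ε, (2 : ℝ) ^ i * P.p t i) + ∑ i ∈ Ipos ε, P.p t i

/-!
Write `W = N + S` with `N = Σ_{i<0} 2^i p_i` and `S = Σ_{i>0} p_i`. In one step `N` halves up to
three sources: the mass `q_1` crossing from `1` to `-1`, the light negative sites (mass below
`S/B⁴`, total weight at most `S/B⁴` because `Σ_{i<0} 2^i ≤ 1`) and the boundary site `-B`
(weight `2^{-B} ≤ ε²/2`). The flow up from `-1` is at most `N/8 + S/B⁴`, so `W` drops by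
about `3N/8 + q_1/2` in every step.

Over `B` steps the moment `Ψ = Σ_{i>0} i p_i ≤ B S` loses `7S/4` per step, and `S` can only be
replenished through `0`; this bounds both the final `S` and the accumulated `Σ S` by the
accumulated flows `Σ q_1` and `Σ N`. Hence the final `W` is either `O(ε B³)` or at most `80 B`
times the accumulated drop, and `1 - 1/(81B) ≤ e^{-1/(81B)}` finishes.
-/

lemma Bval_emod_two (ε : ℝ) : Bval ε % 2 = 1 := by
  unfold Bval; omega

lemma two_zpow_neg_Bval_le {ε : ℝ} (hε : 0 < ε) : (2 : ℝ) ^ (-Bval ε) ≤ ε ^ 2 / 2 := by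
  set c := ⌈Real.logb 2 (1 / ε)⌉
  have hc : 1 / ε ≤ (2 : ℝ) ^ c := calc
    1 / ε = (2 : ℝ) ^ Real.logb 2 (1 / ε) :=
      (Real.rpow_logb (by norm_num) (by norm_num) (by positivity)).symm
    _ ≤ (2 : ℝ) ^ (c : ℝ) := Real.rpow_le_rpow_of_exponent_le (by norm_num) (Int.le_ceil _)
    _ = (2 : ℝ) ^ c := Real.rpow_intCast 2 c
  have hB : (2 : ℝ) ^ Bval ε = 2 * (2 ^ c) ^ 2 := by
    rw [show Bval ε = c + c + 1 by unfold Bval; ring, zpow_add₀ two_ne_zero,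
      zpow_add₀ two_ne_zero, zpow_one]
    ring
  have hsq : (1 / ε) ^ 2 ≤ ((2 : ℝ) ^ c) ^ 2 := pow_le_pow_left₀ (by positivity) hc 2
  rw [zpow_neg, inv_le_comm₀ (by positivity) (by positivity), hB]
  field_simp at hsq ⊢
  linarith

lemma thirteen_le_Bval {ε : ℝ} (hε : ε ∈ Set.Ioo (0 : ℝ) (1 / 32)) : 13 ≤ Bval ε := by
  have h32 : (32 : ℝ) < 1 / ε := by rw [lt_div_iff₀ hε.1]; linarith [hε.2]
  have hlog : (5 : ℝ) < Real.logb 2 (1 / ε) := by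
    have h := Real.logb_lt_logb (b := 2) (by norm_num) (by norm_num) h32
    rwa [show (32 : ℝ) = 2 ^ (5 : ℝ) by norm_num,
      Real.logb_rpow (by norm_num) (by norm_num)] at h
  have : (5 : ℤ) < ⌈Real.logb 2 (1 / ε)⌉ := Int.lt_ceil.mpr (by exact_mod_cast hlog)
  unfold Bval; omega

lemma mem_Iset {ε : ℝ} {i : ℤ} :
    i ∈ Iset ε ↔ -Bval ε ≤ i ∧ i ≤ Bval ε ∧ i % 2 = 1 := by
  simp [Iset, Int.odd_iff, and_assoc]

lemma sum_two_zpow_Ineg_le_one (ε : ℝ) : ∑ i ∈ Ineg ε, (2 : ℝ) ^ i ≤ 1 := by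
  set n := (Bval ε).toNat
  have hsub : Ineg ε ⊆ (Finset.range n).image fun m : ℕ => -(m : ℤ) - 1 := by
    intro i hi
    simp only [Ineg, Finset.mem_filter, mem_Iset] at hi
    simp only [Finset.mem_image, Finset.mem_range]
    exact ⟨(-i - 1).toNat, by omega, by omega⟩
  calc ∑ i ∈ Ineg ε, (2 : ℝ) ^ i
      ≤ ∑ i ∈ (Finset.range n).image fun m : ℕ => -(m : ℤ) - 1, (2 : ℝ) ^ i :=
        Finset.sum_le_sum_of_subset_of_nonneg hsub fun _ _ _ => by positivity
    _ = (∑ m ∈ Finset.range n, (1 / 2 : ℝ) ^ m) / 2 := by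
        rw [Finset.sum_image fun a _ b _ h => by omega, Finset.sum_div]
        refine Finset.sum_congr rfl fun m _ => ?_
        rw [sub_eq_add_neg, zpow_add₀ two_ne_zero, zpow_neg, zpow_neg, zpow_natCast, one_div,
          inv_pow]
        ring
    _ ≤ 1 := by linarith [sum_geometric_two_le n]

noncomputable def stepDown (ε : ℝ) (j : ℤ) : ℤ := max (j - 2) (-Bval ε)

noncomputable def stepUp (ε : ℝ) (j : ℤ) : ℤ := min (j + 2) (Bval ε)

lemma stepDown_mem {ε : ℝ} {j : ℤ} (hj : j ∈ Iset ε) : stepDown ε j ∈ Iset ε := by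
  have := Bval_emod_two ε
  rw [mem_Iset] at hj ⊢; unfold stepDown; omega

lemma stepUp_mem {ε : ℝ} {j : ℤ} (hj : j ∈ Iset ε) : stepUp ε j ∈ Iset ε := by
  have := Bval_emod_two ε
  rw [mem_Iset] at hj ⊢; unfold stepUp; omega

lemma stepDown_of_ne {ε : ℝ} {j : ℤ} (hj : j ∈ Iset ε) (h : j ≠ -Bval ε) :
    stepDown ε j = j - 2 := by
  have := Bval_emod_two ε
  rw [mem_Iset] at hj; unfold stepDown; omega

lemma stepDown_neg_Bval (ε : ℝ) : stepDown ε (-Bval ε) = -Bval ε := by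
  unfold stepDown; omega

lemma stepUp_of_neg {ε : ℝ} {j : ℤ} (hj : j ∈ Iset ε) (h : j < 0) :
    stepUp ε j = j + 2 := by
  rw [mem_Iset] at hj; unfold stepUp; omega

lemma stepUp_pos {ε : ℝ} {j : ℤ} (hj : j ∈ Iset ε) (h : 0 < j) : 0 < stepUp ε j := by
  rw [mem_Iset] at hj; unfold stepUp; omega

lemma stepDown_neg {ε : ℝ} {j : ℤ} (hj : j ∈ Iset ε) (h : j ≤ 1) : stepDown ε j < 0 := by
  have := Bval_emod_two ε
  rw [mem_Iset] at hj; unfold stepDown; omega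

noncomputable def negWeight (i : ℤ) : ℝ := if i < 0 then 2 ^ i else 0

def posWeight (i : ℤ) : ℝ := if 0 < i then 1 else 0

def momentWeight (i : ℤ) : ℝ := if 0 < i then (i : ℝ) else 0

namespace MProcess

variable {ε : ℝ} (P : MProcess ε)

lemma p_nonneg (t : ℕ) (i : ℤ) : 0 ≤ P.p t i := (P.q_nonneg t i).trans (P.q_le_p t i)

lemma sum_mul_p_succ (w : ℤ → ℝ) {t : ℕ} (ht : 1 ≤ t) :
    ∑ i ∈ Iset ε, w i * P.p (t + 1) i =
      ∑ j ∈ Iset ε, (w (stepDown ε j) * P.q t j + w (stepUp ε j) * (P.p t j - P.q t j)) := by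
  have hfiber : ∀ i ∈ Iset ε, w i * P.p (t + 1) i =
      (∑ j ∈ (Iset ε).filter (fun j => stepDown ε j = i), w (stepDown ε j) * P.q t j) +
      ∑ j ∈ (Iset ε).filter (fun j => stepUp ε j = i),
        w (stepUp ε j) * (P.p t j - P.q t j) := by
    intro i hi
    rw [P.update t ht i hi, mul_add, Finset.mul_sum, Finset.mul_sum]
    congr 1 <;> refine Finset.sum_congr rfl fun j hj => ?_ <;>
      rw [← (Finset.mem_filter.mp hj).2]
  rw [Finset.sum_congr rfl hfiber, Finset.sum_add_distrib,
    Finset.sum_fiberwise_of_maps_to fun _ => stepDown_mem,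
    Finset.sum_fiberwise_of_maps_to fun _ => stepUp_mem, ← Finset.sum_add_distrib]

lemma sum_p_eq_one (hm : ∑ i ∈ Iset ε, P.p 1 i = 1) {t : ℕ} (ht : 1 ≤ t) :
    ∑ i ∈ Iset ε, P.p t i = 1 := by
  induction t, ht using Nat.le_induction with
  | base => exact hm
  | succ t ht ih =>
    have h := P.sum_mul_p_succ (fun _ => 1) ht
    simp only [one_mul, add_sub_cancel] at h
    rw [h, ih]

lemma p_le_one (hm : ∑ i ∈ Iset ε, P.p 1 i = 1) {t : ℕ} (ht : 1 ≤ t) {i : ℤ}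
    (hi : i ∈ Iset ε) : P.p t i ≤ 1 :=
  P.sum_p_eq_one hm ht ▸ Finset.single_le_sum (fun j _ => P.p_nonneg t j) hi

noncomputable def negPotential (t : ℕ) : ℝ := ∑ i ∈ Ineg ε, (2 : ℝ) ^ i * P.p t i

noncomputable def posMass (t : ℕ) : ℝ := ∑ i ∈ Ipos ε, P.p t i

noncomputable def posMoment (t : ℕ) : ℝ := ∑ i ∈ Ipos ε, (i : ℝ) * P.p t i

noncomputable def heavyThreshold (t : ℕ) : ℝ := 1 / (Bval ε : ℝ) ^ 4 * P.posMass t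

def upFlow (t : ℕ) : ℝ := P.p t (-1) - P.q t (-1)

lemma Wfun_eq (t : ℕ) : Wfun ε P t = P.negPotential t + P.posMass t := rfl

lemma negPotential_nonneg (t : ℕ) : 0 ≤ P.negPotential t :=
  Finset.sum_nonneg fun i _ => mul_nonneg (by positivity) (P.p_nonneg t i)

lemma posMass_nonneg (t : ℕ) : 0 ≤ P.posMass t :=
  Finset.sum_nonneg fun i _ => P.p_nonneg t i

lemma upFlow_nonneg (t : ℕ) : 0 ≤ P.upFlow t := sub_nonneg.mpr (P.q_le_p t (-1))

lemma Wfun_nonneg (t : ℕ) : 0 ≤ Wfun ε P t :=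
  add_nonneg (P.negPotential_nonneg t) (P.posMass_nonneg t)

lemma posMass_le_posMoment (t : ℕ) : P.posMass t ≤ P.posMoment t :=
  Finset.sum_le_sum fun i hi => by
    have : (1 : ℝ) ≤ i := by exact_mod_cast (Finset.mem_filter.mp hi).2
    nlinarith [P.p_nonneg t i]

lemma posMoment_le_Bval_mul_posMass (t : ℕ) : P.posMoment t ≤ Bval ε * P.posMass t := by
  rw [posMass, Finset.mul_sum]
  refine Finset.sum_le_sum fun i hi => ?_
  have : (i : ℝ) ≤ Bval ε := by
    exact_mod_cast (mem_Iset.mp (Finset.mem_filter.mp hi).1).2.1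
  nlinarith [P.p_nonneg t i]

lemma heavyThreshold_nonneg (t : ℕ) : 0 ≤ P.heavyThreshold t :=
  mul_nonneg (by positivity) (P.posMass_nonneg t)

lemma upFlow_le {t : ℕ} (ht : 1 ≤ t) (hB : 1 ≤ Bval ε) :
    P.upFlow t ≤ P.negPotential t / 8 + P.heavyThreshold t := by
  have hmem : (-1 : ℤ) ∈ Ineg ε :=
    Finset.mem_filter.mpr ⟨mem_Iset.mpr (by omega), by norm_num⟩
  have hthr := P.heavyThreshold_nonneg t
  by_cases heavy : P.heavyThreshold t ≤ P.p t (-1)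
  · have hsmall := P.up_small t ht (-1) hmem heavy
    have hsingle : (2 : ℝ) ^ (-1 : ℤ) * P.p t (-1) ≤ P.negPotential t :=
      Finset.single_le_sum (f := fun i => (2 : ℝ) ^ i * P.p t i)
        (fun i _ => mul_nonneg (by positivity) (P.p_nonneg t i)) hmem
    rw [upFlow]; norm_num at hsingle; linarith
  · rw [upFlow]; linarith [not_le.mp heavy, P.q_nonneg t (-1), P.negPotential_nonneg t]

lemma negPotential_eq_sum (t : ℕ) :
    P.negPotential t = ∑ i ∈ Iset ε, negWeight i * P.p t i := by
  simp only [negPotential, Ineg, Finset.sum_filter, negWeight, ite_mul, zero_mul]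

lemma posMass_eq_sum (t : ℕ) : P.posMass t = ∑ i ∈ Iset ε, posWeight i * P.p t i := by
  simp only [posMass, Ipos, Finset.sum_filter, posWeight, ite_mul, one_mul, zero_mul]

lemma posMoment_eq_sum (t : ℕ) : P.posMoment t = ∑ i ∈ Iset ε, momentWeight i * P.p t i := by
  simp only [posMoment, Ipos, Finset.sum_filter, momentWeight, ite_mul, zero_mul]

lemma negWeight_flow_le {t : ℕ} (ht : 1 ≤ t) {j : ℤ} (hj : j ∈ Iset ε) :
    negWeight (stepDown ε j) * P.q t j + negWeight (stepUp ε j) * (P.p t j - P.q t j) ≤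
      (if j < 0 then 2 ^ j * (P.p t j / 2 + 4 * P.heavyThreshold t) else 0) +
      (if j = -Bval ε then 3 / 4 * 2 ^ j * P.p t j else 0) +
      (if j = 1 then P.q t j / 2 else 0) := by
  obtain ⟨hlo, hhi, hodd⟩ := mem_Iset.mp hj
  have hthr := P.heavyThreshold_nonneg t
  have hq := P.q_nonneg t j
  have hqp := P.q_le_p t j
  rcases lt_or_gt_of_ne (show j ≠ 0 by omega) with hneg | hpos
  · have h2j : (0 : ℝ) < 2 ^ j := by positivity
    have hup : negWeight (stepUp ε j) ≤ 4 * 2 ^ j := by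
      rw [negWeight, stepUp_of_neg hj hneg, zpow_add₀ two_ne_zero]
      split_ifs <;> norm_num <;> linarith
    have hdown : negWeight (stepDown ε j) * P.q t j ≤
        2 ^ j * P.q t j / 4 + (if j = -Bval ε then 3 / 4 * 2 ^ j * P.p t j else 0) := by
      split_ifs with hjB
      · rw [hjB, stepDown_neg_Bval, negWeight, if_pos (by omega), ← hjB]
        nlinarith
      · rw [stepDown_of_ne hj hjB, negWeight, if_pos (by omega), zpow_sub₀ two_ne_zero]
        linarith
    have hflow := mul_le_mul_of_nonneg_right hup (sub_nonneg.mpr hqp)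
    rw [if_pos hneg, if_neg (by omega : j ≠ 1), add_zero]
    by_cases heavy : P.heavyThreshold t ≤ P.p t j
    · have hsmall := P.up_small t ht j (Finset.mem_filter.mpr ⟨hj, hneg⟩) heavy
      nlinarith [mul_le_mul_of_nonneg_left hsmall h2j.le, mul_le_mul_of_nonneg_left hqp h2j.le,
        mul_nonneg h2j.le hthr]
    · nlinarith [mul_le_mul_of_nonneg_left (not_le.mp heavy).le h2j.le, mul_nonneg h2j.le hq]
  · have hup : negWeight (stepUp ε j) = 0 := if_neg (not_lt.mpr (stepUp_pos hj hpos).le)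
    rw [hup, zero_mul, add_zero, stepDown_of_ne hj (by omega), if_neg (by omega),
      if_neg (by omega), zero_add, zero_add, negWeight]
    obtain rfl | hge := show j = 1 ∨ 3 ≤ j by omega
    · norm_num; linarith
    · simp only [if_neg (by omega : ¬ j - 2 < 0), if_neg (by omega : j ≠ 1), zero_mul, le_refl]

lemma sum_negWeight_flow_bound {t : ℕ} (hB : 1 ≤ Bval ε) :
    ∑ j ∈ Iset ε, ((if j < 0 then 2 ^ j * (P.p t j / 2 + 4 * P.heavyThreshold t) else 0) +
      (if j = -Bval ε then 3 / 4 * 2 ^ j * P.p t j else 0) +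
      (if j = 1 then P.q t j / 2 else 0)) =
    P.negPotential t / 2 + 4 * P.heavyThreshold t * ∑ j ∈ Ineg ε, (2 : ℝ) ^ j +
      3 / 4 * 2 ^ (-Bval ε) * P.p t (-Bval ε) + P.q t 1 / 2 := by
  have hodd := Bval_emod_two ε
  rw [Finset.sum_add_distrib, Finset.sum_add_distrib, Finset.sum_ite_eq', Finset.sum_ite_eq',
    if_pos (mem_Iset.mpr (by omega)), if_pos (mem_Iset.mpr (by omega)), ← Finset.sum_filter]
  congr 2
  rw [negPotential, Ineg, Finset.sum_div, Finset.mul_sum, ← Finset.sum_add_distrib]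
  exact Finset.sum_congr rfl fun _ _ => by ring

lemma negPotential_succ_le (hε : 0 < ε) (hB : 1 ≤ Bval ε) (hm : ∑ i ∈ Iset ε, P.p 1 i = 1)
    {t : ℕ} (ht : 1 ≤ t) :
    P.negPotential (t + 1) ≤
      P.negPotential t / 2 + P.q t 1 / 2 + 4 * P.heavyThreshold t + 3 / 8 * ε ^ 2 := by
  have hmemB : -Bval ε ∈ Iset ε := mem_Iset.mpr (by have := Bval_emod_two ε; omega)
  have hboundary : 3 / 4 * 2 ^ (-Bval ε) * P.p t (-Bval ε) ≤ 3 / 8 * ε ^ 2 := by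
    nlinarith [two_zpow_neg_Bval_le hε, P.p_le_one hm ht hmemB, P.p_nonneg t (-Bval ε),
      (by positivity : (0 : ℝ) < 2 ^ (-Bval ε))]
  have hgeom :
      4 * P.heavyThreshold t * ∑ j ∈ Ineg ε, (2 : ℝ) ^ j ≤ 4 * P.heavyThreshold t :=
    mul_le_of_le_one_right (by linarith [P.heavyThreshold_nonneg t]) (sum_two_zpow_Ineg_le_one ε)
  calc P.negPotential (t + 1)
      = ∑ j ∈ Iset ε, (negWeight (stepDown ε j) * P.q t j +
          negWeight (stepUp ε j) * (P.p t j - P.q t j)) := by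
        rw [negPotential_eq_sum, P.sum_mul_p_succ _ ht]
    _ ≤ _ := Finset.sum_le_sum fun j hj => P.negWeight_flow_le ht hj
    _ = _ := P.sum_negWeight_flow_bound hB
    _ ≤ _ := by linarith

lemma posWeight_flow {t : ℕ} {j : ℤ} (hj : j ∈ Iset ε) :
    posWeight (stepDown ε j) * P.q t j + posWeight (stepUp ε j) * (P.p t j - P.q t j) =
      posWeight j * P.p t j - (if j = 1 then P.q t j else 0) +
      (if j = -1 then P.p t j - P.q t j else 0) := by
  obtain ⟨hlo, hhi, hodd⟩ := mem_Iset.mp hj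
  obtain hneg | rfl | hge := show j < 0 ∨ j = 1 ∨ 3 ≤ j by omega
  · rw [stepUp_of_neg hj hneg]
    simp only [posWeight, if_neg (not_lt.mpr (stepDown_neg hj (by omega)).le),
      if_neg (by omega : ¬ 0 < j), if_neg (by omega : j ≠ 1)]
    split_ifs <;> first | omega | ring
  · simp only [posWeight, if_neg (not_lt.mpr (stepDown_neg hj le_rfl).le),
      if_pos (stepUp_pos hj one_pos)]
    norm_num
  · have hdown : 0 < stepDown ε j := by rw [stepDown_of_ne hj (by omega)]; omega
    simp only [posWeight, if_pos hdown,
      if_pos (stepUp_pos hj (by omega)), if_pos (by omega : 0 < j), if_neg (by omega : j ≠ 1),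
      if_neg (by omega : j ≠ -1)]
    ring

lemma posMass_succ (hB : 1 ≤ Bval ε) {t : ℕ} (ht : 1 ≤ t) :
    P.posMass (t + 1) = P.posMass t - P.q t 1 + P.upFlow t := by
  have hodd := Bval_emod_two ε
  rw [posMass_eq_sum, P.sum_mul_p_succ _ ht,
    Finset.sum_congr rfl fun j hj => P.posWeight_flow hj, Finset.sum_add_distrib,
    Finset.sum_sub_distrib, Finset.sum_ite_eq', Finset.sum_ite_eq',
    if_pos (mem_Iset.mpr (by omega)), if_pos (mem_Iset.mpr (by omega)), ← posMass_eq_sum, upFlow]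

lemma momentWeight_stepUp_le {j : ℤ} (hj : j ∈ Iset ε) (h : 0 < j) :
    momentWeight (stepUp ε j) ≤ j + 2 := by
  rw [momentWeight, if_pos (stepUp_pos hj h)]
  exact_mod_cast min_le_left _ _

lemma momentWeight_flow_le {t : ℕ} {j : ℤ} (hj : j ∈ Iset ε) :
    momentWeight (stepDown ε j) * P.q t j + momentWeight (stepUp ε j) * (P.p t j - P.q t j) ≤
      (if 0 < j then (j + 2) * P.p t j - 4 * P.q t j else 0) + (if j = 1 then P.q t j else 0) +
      (if j = -1 then P.p t j - P.q t j else 0) := by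
  obtain ⟨hlo, hhi, hodd⟩ := mem_Iset.mp hj
  have hpq := sub_nonneg.mpr (P.q_le_p t j)
  obtain hle | rfl | rfl | hge := show j ≤ -3 ∨ j = -1 ∨ j = 1 ∨ 3 ≤ j by omega
  · simp only [momentWeight, stepUp_of_neg hj (by omega),
      if_neg (not_lt.mpr (stepDown_neg hj (by omega)).le), if_neg (by omega : ¬ 0 < j + 2),
      if_neg (by omega : ¬ 0 < j), if_neg (by omega : j ≠ 1), if_neg (by omega : j ≠ -1)]
    simp
  · simp only [momentWeight, stepUp_of_neg hj (by omega),
      if_neg (not_lt.mpr (stepDown_neg hj (by omega)).le)]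
    norm_num
  · have hup := mul_le_mul_of_nonneg_right (momentWeight_stepUp_le hj one_pos) hpq
    simp only [momentWeight, if_neg (not_lt.mpr (stepDown_neg hj le_rfl).le)] at hup ⊢
    norm_num at hup ⊢
    linarith
  · have hup := mul_le_mul_of_nonneg_right (momentWeight_stepUp_le hj (by omega)) hpq
    have hdown : momentWeight (stepDown ε j) = j - 2 := by
      rw [stepDown_of_ne hj (by omega), momentWeight, if_pos (by omega)]; push_cast; ring
    rw [hdown, if_pos (by omega), if_neg (by omega), if_neg (by omega)]
    linarith

lemma posMoment_succ_le (hB : 1 ≤ Bval ε) {t : ℕ} (ht : 1 ≤ t) :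
    P.posMoment (t + 1) ≤ P.posMoment t - 7 / 4 * P.posMass t + P.q t 1 + P.upFlow t := by
  have hodd := Bval_emod_two ε
  have hdown : 15 / 16 * P.posMass t ≤ ∑ i ∈ Ipos ε, P.q t i := P.mass_down t ht
  calc P.posMoment (t + 1)
      = ∑ j ∈ Iset ε, (momentWeight (stepDown ε j) * P.q t j +
          momentWeight (stepUp ε j) * (P.p t j - P.q t j)) := by
        rw [posMoment_eq_sum, P.sum_mul_p_succ _ ht]
    _ ≤ _ := Finset.sum_le_sum fun j hj => P.momentWeight_flow_le hj
    _ = P.posMoment t + 2 * P.posMass t - 4 * ∑ i ∈ Ipos ε, P.q t i + P.q t 1 +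
          P.upFlow t := by
        rw [Finset.sum_add_distrib, Finset.sum_add_distrib, Finset.sum_ite_eq', Finset.sum_ite_eq',
          if_pos (mem_Iset.mpr (by omega)), if_pos (mem_Iset.mpr (by omega)), ← Finset.sum_filter,
          posMoment, posMass, Finset.mul_sum, Finset.mul_sum, ← Finset.sum_add_distrib,
          ← Finset.sum_sub_distrib, upFlow]
        congr 2
        exact Finset.sum_congr rfl fun _ _ => by ring
    _ ≤ _ := by linarith

lemma Wfun_succ_le (hε : 0 < ε) (hB : 1 ≤ Bval ε) (hm : ∑ i ∈ Iset ε, P.p 1 i = 1)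
    {t : ℕ} (ht : 1 ≤ t) :
    Wfun ε P (t + 1) ≤ Wfun ε P t - 3 / 8 * P.negPotential t - P.q t 1 / 2 +
      5 * P.heavyThreshold t + 3 / 8 * ε ^ 2 := by
  rw [Wfun_eq, Wfun_eq, P.posMass_succ hB ht]
  linarith [P.negPotential_succ_le hε hB hm ht, P.upFlow_le ht hB]

lemma Wfun_add_le (hε : 0 < ε) (hB : 1 ≤ Bval ε) (hm : ∑ i ∈ Iset ε, P.p 1 i = 1)
    {t : ℕ} (ht : 1 ≤ t) (n : ℕ) :
    Wfun ε P (t + n) ≤ Wfun ε P t - 3 / 8 * ∑ k ∈ Finset.range n, P.negPotential (t + k) -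
      (∑ k ∈ Finset.range n, P.q (t + k) 1) / 2 +
      5 * ∑ k ∈ Finset.range n, P.heavyThreshold (t + k) + n * (3 / 8 * ε ^ 2) := by
  induction n with
  | zero => simp
  | succ n ih =>
    simp only [Finset.sum_range_succ, ← add_assoc]
    push_cast
    linarith [P.Wfun_succ_le hε hB hm (by omega : 1 ≤ t + n)]

lemma posMass_sub_sum_le (hB : 1 ≤ Bval ε) {t : ℕ} (ht : 1 ≤ t) (n : ℕ) :
    P.posMass t - ∑ k ∈ Finset.range n, P.q (t + k) 1 ≤ P.posMass (t + n) := by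
  induction n with
  | zero => simp
  | succ n ih =>
    rw [Finset.sum_range_succ, ← add_assoc, P.posMass_succ hB (by omega)]
    linarith [P.upFlow_nonneg (t + n)]

lemma mul_posMass_sub_sum_le (hB : 1 ≤ Bval ε) {t : ℕ} (ht : 1 ≤ t) (n : ℕ) :
    n * (P.posMass t - ∑ k ∈ Finset.range n, P.q (t + k) 1) ≤
      ∑ k ∈ Finset.range n, P.posMass (t + k) := by
  calc (n : ℝ) * (P.posMass t - ∑ k ∈ Finset.range n, P.q (t + k) 1)
      = ∑ _k ∈ Finset.range n, (P.posMass t - ∑ k ∈ Finset.range n, P.q (t + k) 1) := by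
        rw [Finset.sum_const, Finset.card_range, nsmul_eq_mul]
    _ ≤ _ := Finset.sum_le_sum fun k hk => ?_
  have hsub : ∑ j ∈ Finset.range k, P.q (t + j) 1 ≤ ∑ j ∈ Finset.range n, P.q (t + j) 1 :=
    Finset.sum_le_sum_of_subset_of_nonneg
      (Finset.range_subset_range.mpr (Finset.mem_range.mp hk).le) fun j _ _ => P.q_nonneg (t + j) 1
  linarith [P.posMass_sub_sum_le hB ht k]

lemma posMoment_add_le (hB : 1 ≤ Bval ε) {t : ℕ} (ht : 1 ≤ t) (n : ℕ) :
    P.posMoment (t + n) ≤ P.posMoment t - 7 / 4 * ∑ k ∈ Finset.range n, P.posMass (t + k) +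
      ∑ k ∈ Finset.range n, P.q (t + k) 1 + ∑ k ∈ Finset.range n, P.upFlow (t + k) := by
  induction n with
  | zero => simp
  | succ n ih =>
    simp only [Finset.sum_range_succ, ← add_assoc]
    linarith [P.posMoment_succ_le hB (by omega : 1 ≤ t + n)]

lemma posMass_add_half_sum_le (hB : 2 ≤ Bval ε) {t : ℕ} (ht : 1 ≤ t) :
    P.posMass (t + (Bval ε).toNat) +
        (∑ k ∈ Finset.range (Bval ε).toNat, P.posMass (t + k)) / 2 ≤
      (Bval ε + 1) * ∑ k ∈ Finset.range (Bval ε).toNat, P.q (t + k) 1 +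
      (∑ k ∈ Finset.range (Bval ε).toNat, P.negPotential (t + k)) / 8 := by
  set n := (Bval ε).toNat
  have hn : (n : ℝ) = Bval ε := by exact_mod_cast Int.toNat_of_nonneg (by omega : 0 ≤ Bval ε)
  have hB' : (2 : ℝ) ≤ Bval ε := by exact_mod_cast hB
  have hupFlow : ∑ k ∈ Finset.range n, P.upFlow (t + k) ≤
      (∑ k ∈ Finset.range n, P.negPotential (t + k)) / 8 +
      ∑ k ∈ Finset.range n, P.heavyThreshold (t + k) := by
    rw [Finset.sum_div, ← Finset.sum_add_distrib]
    exact Finset.sum_le_sum fun k _ => P.upFlow_le (by omega) (by omega)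
  have hthr : ∑ k ∈ Finset.range n, P.heavyThreshold (t + k) ≤
      (∑ k ∈ Finset.range n, P.posMass (t + k)) / 4 := by
    rw [Finset.sum_div]
    refine Finset.sum_le_sum fun k _ => ?_
    rw [heavyThreshold, one_div, inv_mul_le_iff₀ (by positivity)]
    nlinarith [P.posMass_nonneg (t + k), pow_le_pow_left₀ (by norm_num) hB' 4]
  have hmass := P.mul_posMass_sub_sum_le (by omega) ht n
  rw [hn] at hmass
  linarith [P.posMass_le_posMoment (t + n), P.posMoment_add_le (by omega) ht n,
    P.posMoment_le_Bval_mul_posMass t]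

lemma negPotential_add_le (hε : 0 < ε) (hB : 1 ≤ Bval ε) (hm : ∑ i ∈ Iset ε, P.p 1 i = 1)
    {t : ℕ} (ht : 1 ≤ t) {n : ℕ} (hn : 1 ≤ n) :
    P.negPotential (t + n) ≤ (∑ k ∈ Finset.range n, P.negPotential (t + k)) / 2 +
      (∑ k ∈ Finset.range n, P.q (t + k) 1) / 2 +
      4 * ∑ k ∈ Finset.range n, P.heavyThreshold (t + k) + 3 / 8 * ε ^ 2 := by
  obtain ⟨m, rfl⟩ := Nat.exists_eq_add_of_le' hn
  have hlast : m ∈ Finset.range (m + 1) := Finset.self_mem_range_succ m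
  have hstep := P.negPotential_succ_le hε hB hm (by omega : 1 ≤ t + m)
  rw [← add_assoc]
  linarith [Finset.single_le_sum (fun k _ => P.negPotential_nonneg (t + k)) hlast,
    Finset.single_le_sum (fun k _ => P.q_nonneg (t + k) 1) hlast,
    Finset.single_le_sum (fun k _ => P.heavyThreshold_nonneg (t + k)) hlast]

lemma sum_heavyThreshold (t n : ℕ) :
    ∑ k ∈ Finset.range n, P.heavyThreshold (t + k) =
      (∑ k ∈ Finset.range n, P.posMass (t + k)) / (Bval ε : ℝ) ^ 4 := by
  simp only [heavyThreshold, ← Finset.mul_sum]; ring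

end MProcess

lemma le_mul_sub_of_window_bounds {b ε W₀ N S NN Q SS : ℝ} (hb : 13 ≤ b) (hε₀ : 0 ≤ ε)
    (hε₁ : ε ≤ 1) (hS : 0 ≤ S) (hNN : 0 ≤ NN) (hQ : 0 ≤ Q) (hSS : 0 ≤ SS)
    (hdecay : N + S ≤ W₀ - 3 / 8 * NN - Q / 2 + 5 * (SS / b ^ 4) + b * (3 / 8 * ε ^ 2))
    (hpos : S + SS / 2 ≤ (b + 1) * Q + NN / 8)
    (hneg : N ≤ NN / 2 + Q / 2 + 4 * (SS / b ^ 4) + 3 / 8 * ε ^ 2)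
    (hlarge : 64 * ε * b ^ 3 < N + S) :
    N + S ≤ 80 * b * (W₀ - (N + S)) := by
  set D := NN + Q
  have hb0 : 0 < b := by linarith
  have hy : SS / b ^ 4 ≤ D / 169 := by
    have hSSD : SS ≤ b ^ 2 * D := by
      nlinarith [mul_nonneg (by nlinarith : (0 : ℝ) ≤ b ^ 2 - 2 * b - 2) hQ,
        mul_nonneg (by nlinarith : (0 : ℝ) ≤ b ^ 2 - 1 / 4) hNN]
    rw [div_le_div_iff₀ (by positivity) (by norm_num)]
    nlinarith [mul_le_mul_of_nonneg_left hSSD (by norm_num : (0 : ℝ) ≤ 169),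
      mul_le_mul_of_nonneg_right (pow_le_pow_left₀ (by norm_num) hb 2 : (13 : ℝ) ^ 2 ≤ b ^ 2)
        (by positivity : 0 ≤ b ^ 2 * D)]
  have hW : N + S ≤ 2 * b * D + ε ^ 2 := by nlinarith
  have hD : 31 * ε * b ^ 2 ≤ D := by
    have hε2 : ε ^ 2 ≤ 2 * ε * b ^ 3 := by nlinarith [pow_le_pow_left₀ (by norm_num) hb 3]
    nlinarith
  have hdrop : D / 3 - 3 / 8 * b * ε ^ 2 ≤ W₀ - (N + S) := by nlinarith
  have hsmall : ε ^ 2 + 30 * b ^ 2 * ε ^ 2 ≤ b * D := by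
    have hε2 : ε ^ 2 ≤ ε := by nlinarith
    nlinarith [mul_le_mul_of_nonneg_left hD hb0.le, mul_le_mul_of_nonneg_left hε2 (sq_nonneg b),
      mul_le_mul_of_nonneg_left (by nlinarith : b ^ 2 ≤ b ^ 3) hε₀,
      mul_nonneg (by nlinarith : (0 : ℝ) ≤ b ^ 2 - 1) (sq_nonneg ε)]
  nlinarith [mul_le_mul_of_nonneg_left hdrop hb0.le]

lemma le_exp_mul_of_le_mul_sub {b W₀ W : ℝ} (hb : 1 ≤ b) (hW₀ : 0 ≤ W₀)
    (h : W ≤ 80 * b * (W₀ - W)) : W ≤ Real.exp (-(1 / (81 * b))) * W₀ := by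
  have hb0 : 0 < b := by linarith
  have hlin : W ≤ (1 - 1 / (81 * b)) * W₀ := by
    rw [sub_mul, one_div, inv_mul_eq_div, le_sub_iff_add_le, ← le_sub_iff_add_le',
      div_le_iff₀ (by positivity)]
    nlinarith
  calc W ≤ (1 - 1 / (81 * b)) * W₀ := hlin
    _ ≤ _ :=
      mul_le_mul_of_nonneg_right (by linarith [Real.add_one_le_exp (-(1 / (81 * b)))]) hW₀

/-- equation (16) of the paper: for every `ε ∈ (0, 1/32)`, every process on
`I_ε` with initial total mass `1`, and every step `t ≥ 1`,
`W_{t+B_ε} ≤ max(e^{-1/(81 B_ε)} W_t, 64 ε B_ε³)`. -/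
theorem stmt5 :
    ∀ ε : ℝ, ε ∈ Set.Ioo (0 : ℝ) (1 / 32) →
      ∀ P : MProcess ε, (∑ i ∈ Iset ε, P.p 1 i) = 1 →
        ∀ t : ℕ, 1 ≤ t →
          Wfun ε P (t + (Bval ε).toNat) ≤
            max (Real.exp (-(1 / (81 * (Bval ε : ℝ)))) * Wfun ε P t)
              (64 * ε * (Bval ε : ℝ) ^ 3) := by
  intro ε hε P hm t ht
  have hB := thirteen_le_Bval hε
  have hb : (13 : ℝ) ≤ Bval ε := by exact_mod_cast hB
  set n := (Bval ε).toNat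
  have hn : (n : ℝ) = Bval ε := by exact_mod_cast Int.toNat_of_nonneg (by omega : 0 ≤ Bval ε)
  rcases le_or_gt (Wfun ε P (t + n)) (64 * ε * (Bval ε : ℝ) ^ 3) with hsmall | hlarge
  · exact le_max_of_le_right hsmall
  refine le_max_of_le_left (le_exp_mul_of_le_mul_sub (by linarith) (P.Wfun_nonneg t) ?_)
  have hdecay := P.Wfun_add_le hε.1 (by omega) hm ht n
  have hneg := P.negPotential_add_le hε.1 (by omega) hm ht (n := n) (by omega)
  rw [P.sum_heavyThreshold, hn] at hdecay
  rw [P.sum_heavyThreshold] at hneg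
  rw [P.Wfun_eq (t + n)] at hdecay hlarge ⊢
  exact le_mul_sub_of_window_bounds hb hε.1.le (by linarith [hε.2]) (P.posMass_nonneg _)
    (Finset.sum_nonneg fun k _ => P.negPotential_nonneg (t + k))
    (Finset.sum_nonneg fun k _ => P.q_nonneg (t + k) 1)
    (Finset.sum_nonneg fun k _ => P.posMass_nonneg (t + k))
    hdecay (P.posMass_add_half_sum_le (by omega) ht) hneg hlarge
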